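/- arXiv:1702.00526 — 4 statements merged into one kernel-verified Lean document; each statement's English description precedes it below -/
import Mathlib

section
/- Let $f$ be convex and continuous, $X\subset\mathbb{R}^n$ compact, $\operatorname{conv}(X)$ its convex hull, $Z$ a linear subspace of $\mathbb{R}^q$, $Q\in\mathbb{R}^{q\times n}$, and $\rho>0$. For any $\bar\omega\in Z^\perp$, $\max_{\omega\in Z^\perp}\big[\phi^C(\omega)-\tfrac{1}{2\rho}\|\omega-\bar\omega\|_2^2\big] = \min_{x\in\operatorname{conv}(X),\,z\in Z} L_\rho(x,z,\bar\omega)$, where $\phi^C(\omega)=\min_{x\in\operatorname{conv}(X)} f(x)+\omega^\top Qx$ and $L_\rho(x,z,\omega)=f(x)+\omega^\top Qx+\tfrac{\rho}{2}\|Qx-z\|_2^2$. -/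
open RealInnerProductSpace

/-- The convexified dual function `φ^C`. -/
noncomputable def phiC {n q : ℕ} (f : EuclideanSpace ℝ (Fin n) → ℝ)
    (Q : EuclideanSpace ℝ (Fin n) →ₗ[ℝ] EuclideanSpace ℝ (Fin q))
    (X : Set (EuclideanSpace ℝ (Fin n))) (ω : EuclideanSpace ℝ (Fin q)) : ℝ :=
  sInf {r : ℝ | ∃ x ∈ convexHull ℝ X, r = f x + ⟪ω, Q x⟫}

/-- The augmented Lagrangian `L_ρ`. -/
noncomputable def augL {n q : ℕ} (f : EuclideanSpace ℝ (Fin n) → ℝ)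
    (Q : EuclideanSpace ℝ (Fin n) →ₗ[ℝ] EuclideanSpace ℝ (Fin q)) (ρ : ℝ)
    (x : EuclideanSpace ℝ (Fin n)) (z ω : EuclideanSpace ℝ (Fin q)) : ℝ :=
  f x + ⟪ω, Q x⟫ + ρ / 2 * ‖Q x - z‖ ^ 2

/-!
Weak duality is Young's inequality: for `ω, ω̄ ∈ Zᗮ` and `z ∈ Z` one has
`⟪ω - ω̄, Q x⟫ = ⟪ω - ω̄, Q x - z⟫ ≤ ‖ω - ω̄‖² / (2ρ) + ρ/2 ‖Q x - z‖²`.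
For equality, minimise `x ↦ L_ρ(x, P_Z (Q x), ω̄) = f x + ⟪ω̄, Q x⟫ + ρ/2 ‖P_{Zᗮ} (Q x)‖²` over the
compact convex set `closure (conv X)`. The first-order condition at a minimiser `x*` says that `x*`
minimises `f + ⟪ω*, Q ·⟫` for `ω* = ω̄ + ρ P_{Zᗮ} (Q x*)`, and then the dual objective at `ω*`
equals `L_ρ` at `x*`. As `x*` is a limit of points of `conv X`, this closes the gap.
-/

open Set Filter Topology

theorem nonneg_of_forall_nonneg_add_mul {d B : ℝ}
    (h : ∀ t ∈ Ioc (0 : ℝ) 1, 0 ≤ d + t * B) : 0 ≤ d := by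
  have hlim : Tendsto (fun t : ℝ => d + t * B) (𝓝[>] 0) (𝓝 d) :=
    (Continuous.tendsto' (by fun_prop) 0 d (by simp)).mono_left nhdsWithin_le_nhds
  exact ge_of_tendsto hlim (by filter_upwards [Ioc_mem_nhdsGT one_pos] using h)

theorem real_inner_le_inv_mul_norm_sq_add {F : Type*} [NormedAddCommGroup F]
    [InnerProductSpace ℝ F] {ρ : ℝ} (hρ : 0 < ρ) (a b : F) :
    ⟪a, b⟫ ≤ 1 / (2 * ρ) * ‖a‖ ^ 2 + ρ / 2 * ‖b‖ ^ 2 := by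
  have h := norm_sub_sq_real a (ρ • b)
  rw [real_inner_smul_right, norm_smul, Real.norm_of_nonneg hρ.le] at h
  have key : 2 * ρ * ⟪a, b⟫ ≤ ‖a‖ ^ 2 + ρ ^ 2 * ‖b‖ ^ 2 := by
    nlinarith [sq_nonneg ‖a - ρ • b‖]
  calc ⟪a, b⟫ = 2 * ρ * ⟪a, b⟫ / (2 * ρ) := by field_simp
    _ ≤ (‖a‖ ^ 2 + ρ ^ 2 * ‖b‖ ^ 2) / (2 * ρ) := by gcongr
    _ = 1 / (2 * ρ) * ‖a‖ ^ 2 + ρ / 2 * ‖b‖ ^ 2 := by field_simp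

theorem ConvexOn.isMinOn_add_inner_of_isMinOn_add_norm_sq {E F : Type*} [AddCommGroup E]
    [Module ℝ E] [NormedAddCommGroup F] [InnerProductSpace ℝ F] {s : Set E} {φ : E → ℝ}
    (hφ : ConvexOn ℝ s φ) (L : E →ₗ[ℝ] F) {c : ℝ} {x₀ : E} (hx₀ : x₀ ∈ s)
    (hmin : IsMinOn (fun x => φ x + c / 2 * ‖L x‖ ^ 2) s x₀) :
    IsMinOn (fun x => φ x + c * ⟪L x₀, L x⟫) s x₀ := by
  rw [isMinOn_iff] at hmin ⊢
  intro y hy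
  suffices 0 ≤ φ y - φ x₀ + c * ⟪L x₀, L (y - x₀)⟫ by
    rw [map_sub, inner_sub_right] at this; linarith
  refine nonneg_of_forall_nonneg_add_mul (B := c / 2 * ‖L (y - x₀)‖ ^ 2)
    fun t ⟨ht0, ht1⟩ => ?_
  have hmem : (1 - t) • x₀ + t • y ∈ s := hφ.1 hx₀ hy (by linarith) ht0.le (by ring)
  have hconv : φ ((1 - t) • x₀ + t • y) ≤ (1 - t) * φ x₀ + t * φ y :=
    hφ.2 hx₀ hy (by linarith) ht0.le (by ring)
  have hL : L ((1 - t) • x₀ + t • y) = L x₀ + t • L (y - x₀) := by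
    rw [map_add, map_smul, map_smul, map_sub, sub_smul, one_smul, smul_sub]; abel
  have hnorm : ‖L ((1 - t) • x₀ + t • y)‖ ^ 2 =
      ‖L x₀‖ ^ 2 + 2 * t * ⟪L x₀, L (y - x₀)⟫ + t ^ 2 * ‖L (y - x₀)‖ ^ 2 := by
    rw [hL, norm_add_sq_real, real_inner_smul_right, norm_smul, mul_pow, Real.norm_eq_abs,
      sq_abs]; ring
  have hcmp := hmin _ hmem
  rw [hnorm] at hcmp
  refine (mul_nonneg_iff_of_pos_left ht0).1 ?_
  nlinarith

theorem csSup_eq_csInf_of_mem_closure_of_le {α : Type*} [ConditionallyCompleteLinearOrder α]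
    [TopologicalSpace α] [OrderTopology α] {S T : Set α}
    (hST : ∀ a ∈ S, a ∈ lowerBounds T) {a b : α} (ha : a ∈ S) (hb : b ∈ closure T)
    (hba : b ≤ a) : sSup S = sInf T := by
  have hglb : IsGLB T b := isGLB_of_mem_closure (fun c hc => hba.trans (hST a ha hc)) hb
  have hab : a = b := le_antisymm (hglb.2 (hST a ha)) hba
  rw [IsGreatest.csSup_eq ⟨hab ▸ ha, fun a' ha' => hglb.2 (hST a' ha')⟩,
    hglb.csInf_eq (closure_nonempty_iff.1 ⟨b, hb⟩)]

section phiC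

variable {n q : ℕ} {f : EuclideanSpace ℝ (Fin n) → ℝ}
  {Q : EuclideanSpace ℝ (Fin n) →ₗ[ℝ] EuclideanSpace ℝ (Fin q)}
  {X : Set (EuclideanSpace ℝ (Fin n))}

theorem phiC_le (hfc : Continuous f) (hX : IsCompact X) (ω : EuclideanSpace ℝ (Fin q))
    {x : EuclideanSpace ℝ (Fin n)} (hx : x ∈ convexHull ℝ X) :
    phiC f Q X ω ≤ f x + ⟪ω, Q x⟫ := by
  have hK : IsCompact (closure (convexHull ℝ X)) :=
    (isBounded_convexHull.2 hX.isBounded).isCompact_closure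
  have hQ := Q.continuous_of_finiteDimensional
  have hg : Continuous fun y => f y + ⟪ω, Q y⟫ := by fun_prop
  refine csInf_le ((hK.bddBelow_image hg.continuousOn).mono ?_) ⟨x, hx, rfl⟩
  rintro _ ⟨y, hy, rfl⟩
  exact ⟨y, subset_closure hy, rfl⟩

theorem le_phiC (hXne : X.Nonempty) {ω : EuclideanSpace ℝ (Fin q)} {c : ℝ}
    (h : ∀ x ∈ convexHull ℝ X, c ≤ f x + ⟪ω, Q x⟫) : c ≤ phiC f Q X ω := by
  obtain ⟨x, hx⟩ := hXne
  refine le_csInf ⟨_, x, subset_convexHull ℝ X hx, rfl⟩ ?_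
  rintro _ ⟨y, hy, rfl⟩
  exact h y hy

theorem phiC_sub_le_augL (hfc : Continuous f) (hX : IsCompact X)
    {Z : Submodule ℝ (EuclideanSpace ℝ (Fin q))} {ρ : ℝ} (hρ : 0 < ρ)
    {ω ωbar : EuclideanSpace ℝ (Fin q)} (hω : ω ∈ Zᗮ) (hωbar : ωbar ∈ Zᗮ)
    {x : EuclideanSpace ℝ (Fin n)} (hx : x ∈ convexHull ℝ X) {z : EuclideanSpace ℝ (Fin q)}
    (hz : z ∈ Z) :
    phiC f Q X ω - 1 / (2 * ρ) * ‖ω - ωbar‖ ^ 2 ≤ augL f Q ρ x z ωbar := by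
  have horth : ⟪ω - ωbar, z⟫ = 0 :=
    Submodule.inner_left_of_mem_orthogonal hz (Zᗮ.sub_mem hω hωbar)
  have hsplit : ⟪ω, Q x⟫ = ⟪ωbar, Q x⟫ + ⟪ω - ωbar, Q x - z⟫ := by
    rw [inner_sub_right, horth, inner_sub_left]; ring
  have := real_inner_le_inv_mul_norm_sq_add hρ (ω - ωbar) (Q x - z)
  have := phiC_le hfc hX ω (Q := Q) hx
  rw [augL]
  linarith

theorem exists_augL_le_phiC_sub (hf : ConvexOn ℝ univ f) (hfc : Continuous f)
    (hX : IsCompact X) (hXne : X.Nonempty)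
    (Z : Submodule ℝ (EuclideanSpace ℝ (Fin q))) (ρ : ℝ)
    {ωbar : EuclideanSpace ℝ (Fin q)} (hωbar : ωbar ∈ Zᗮ) :
    ∃ ω ∈ Zᗮ, ∃ x ∈ closure (convexHull ℝ X),
      augL f Q ρ x (Z.starProjection (Q x)) ωbar ≤
        phiC f Q X ω - 1 / (2 * ρ) * ‖ω - ωbar‖ ^ 2 := by
  set K := closure (convexHull ℝ X)
  have hQ := Q.continuous_of_finiteDimensional
  have hK : IsCompact K := (isBounded_convexHull.2 hX.isBounded).isCompact_closure
  set L := Zᗮ.starProjection.toLinearMap ∘ₗ Q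
  have hL : ∀ x, L x = Q x - Z.starProjection (Q x) := fun x => by simp [L]
  set φ := fun x => f x + ⟪ωbar, Q x⟫
  have hφ : ConvexOn ℝ K φ :=
    (hf.subset (subset_univ _) (convex_convexHull ℝ X).closure).add
      (((innerₛₗ ℝ ωbar) ∘ₗ Q).convexOn (convex_convexHull ℝ X).closure)
  obtain ⟨xs, hxs, hmin⟩ := hK.exists_isMinOn (hXne.mono (subset_convexHull ℝ X)).closure
    (f := fun x => augL f Q ρ x (Z.starProjection (Q x)) ωbar) (by unfold augL; fun_prop)
  have hopt := hφ.isMinOn_add_inner_of_isMinOn_add_norm_sq L hxs (c := ρ) (by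
    simpa only [φ, hL, augL] using hmin)
  have hLxs : L xs ∈ Zᗮ := Zᗮ.starProjection_apply_mem _
  have hinner : ∀ y, ⟪L xs, L y⟫ = ⟪L xs, Q y⟫ := fun y => by
    rw [hL y, inner_sub_right,
      Submodule.inner_left_of_mem_orthogonal (Z.starProjection_apply_mem _) hLxs, sub_zero]
  refine ⟨ωbar + ρ • L xs, Zᗮ.add_mem hωbar (Zᗮ.smul_mem ρ hLxs), xs, hxs, ?_⟩
  have hdual : φ xs + ρ * ⟪L xs, L xs⟫ ≤ phiC f Q X (ωbar + ρ • L xs) := by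
    refine le_phiC hXne fun y hy => ?_
    have := hopt (subset_closure hy)
    rwa [inner_add_left, real_inner_smul_left, ← hinner, ← add_assoc]
  calc augL f Q ρ xs (Z.starProjection (Q xs)) ωbar
      = φ xs + ρ * ⟪L xs, L xs⟫ - 1 / (2 * ρ) * ‖ρ • L xs‖ ^ 2 := by
        rw [augL, ← hL, real_inner_self_eq_norm_sq, norm_smul, Real.norm_eq_abs, mul_pow,
          sq_abs]
        field_simp
        ring
    _ ≤ phiC f Q X (ωbar + ρ • L xs) -
          1 / (2 * ρ) * ‖ωbar + ρ • L xs - ωbar‖ ^ 2 := by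
        rw [add_sub_cancel_left]
        gcongr

end phiC

theorem stmt1 (n q : ℕ) (f : EuclideanSpace ℝ (Fin n) → ℝ)
    (hf : ConvexOn ℝ Set.univ f) (hfc : Continuous f)
    (Q : EuclideanSpace ℝ (Fin n) →ₗ[ℝ] EuclideanSpace ℝ (Fin q))
    (X : Set (EuclideanSpace ℝ (Fin n))) (hX : IsCompact X) (hXne : X.Nonempty)
    (Z : Submodule ℝ (EuclideanSpace ℝ (Fin q)))
    (ρ : ℝ) (hρ : 0 < ρ) (ωbar : EuclideanSpace ℝ (Fin q)) (hωbar : ωbar ∈ Zᗮ) :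
    sSup {r : ℝ | ∃ ω ∈ Zᗮ, r = phiC f Q X ω - 1 / (2 * ρ) * ‖ω - ωbar‖ ^ 2} =
      sInf {r : ℝ | ∃ x ∈ convexHull ℝ X, ∃ z ∈ Z, r = augL f Q ρ x z ωbar} := by
  obtain ⟨ω, hω, x, hx, hle⟩ := exists_augL_le_phiC_sub hf hfc hX hXne Z ρ hωbar
  refine csSup_eq_csInf_of_mem_closure_of_le ?_ ⟨ω, hω, rfl⟩ ?_ hle
  · rintro _ ⟨ω', hω', rfl⟩ _ ⟨x', hx', z, hz, rfl⟩
    exact phiC_sub_le_augL hfc hX hρ hω' hωbar hx' hz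
  · have hQ := Q.continuous_of_finiteDimensional
    exact map_mem_closure (f := fun y => augL f Q ρ y (Z.starProjection (Q y)) ωbar)
      (by unfold augL; fun_prop) hx
      fun y hy => ⟨y, hy, _, Z.starProjection_apply_mem _, rfl⟩
end

section
/- Let $f$ be convex and continuously differentiable, $X$ compact, $Z$ a linear subspace, $Q\in\mathbb{R}^{q\times n}$, $\rho>0$. Let $x^k\in\operatorname{conv}(X)$ and $z^k\in\arg\min_{z\in Z}\|Qx^k-z\|$. Then for every $\omega\in Z^\perp$, $L_\rho(x^k,z^k,\omega)+\tfrac{\rho}{2}\|Qx^k-z^k\|_2^2 \ge \phi^C(\omega+\rho(Qx^k-z^k))$. -/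
open RealInnerProductSpace

theorem stmt3 (n q : ℕ) (f : EuclideanSpace ℝ (Fin n) → ℝ)
    (hf : ConvexOn ℝ Set.univ f) (hfd : ContDiff ℝ 1 f)
    (Q : EuclideanSpace ℝ (Fin n) →ₗ[ℝ] EuclideanSpace ℝ (Fin q))
    (X : Set (EuclideanSpace ℝ (Fin n))) (hX : IsCompact X) (hXne : X.Nonempty)
    (Z : Submodule ℝ (EuclideanSpace ℝ (Fin q))) (ρ : ℝ) (hρ : 0 < ρ)
    (xk : EuclideanSpace ℝ (Fin n)) (hxk : xk ∈ convexHull ℝ X)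
    (zk : EuclideanSpace ℝ (Fin q)) (hzk : zk ∈ Z)
    (hzmin : ∀ z ∈ Z, ‖Q xk - zk‖ ≤ ‖Q xk - z‖)
    (ω : EuclideanSpace ℝ (Fin q)) (hω : ω ∈ Zᗮ) :
    augL f Q ρ xk zk ω + ρ / 2 * ‖Q xk - zk‖ ^ 2 ≥
      phiC f Q X (ω + ρ • (Q xk - zk)) := by
  set d : EuclideanSpace ℝ (Fin q) := Q xk - zk with hd
  -- d ⊥ zk
  have hdz : ⟪d, zk⟫ = 0 := by
    by_cases h0 : zk = 0
    · simp [h0]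
    · by_contra hc
      set c : ℝ := ⟪d, zk⟫ with hcdef
      set t : ℝ := c / ‖zk‖ ^ 2 with ht
      have hz2 : (0:ℝ) < ‖zk‖ ^ 2 := pow_pos (norm_pos_iff.mpr h0) 2
      have hz' : zk + t • zk ∈ Z := Z.add_mem hzk (Z.smul_mem t hzk)
      have h1 : ‖d‖ ≤ ‖d - t • zk‖ := by
        have := hzmin _ hz'
        have heq : Q xk - (zk + t • zk) = d - t • zk := by
          simp [hd]; abel
        rwa [heq] at this
      have h2 : ‖d‖ ^ 2 ≤ ‖d - t • zk‖ ^ 2 :=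
        pow_le_pow_left₀ (norm_nonneg _) h1 2
      have h3 : ‖d - t • zk‖ ^ 2 = ‖d‖ ^ 2 - 2 * (t * c) + t ^ 2 * ‖zk‖ ^ 2 := by
        rw [norm_sub_sq_real, real_inner_smul_right, norm_smul]
        simp [mul_pow, hcdef]
      have htc : t * c = c ^ 2 / ‖zk‖ ^ 2 := by
        rw [ht]; ring
      have ht2 : t ^ 2 * ‖zk‖ ^ 2 = c ^ 2 / ‖zk‖ ^ 2 := by
        rw [ht]; field_simp
      rw [h3, htc, ht2] at h2
      have : c ^ 2 / ‖zk‖ ^ 2 ≤ 0 := by linarith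
      have hc2 : (0:ℝ) < c ^ 2 := by positivity
      have : (0:ℝ) < c ^ 2 / ‖zk‖ ^ 2 := div_pos hc2 hz2
      linarith
  -- the set defining phiC
  set ω' : EuclideanSpace ℝ (Fin q) := ω + ρ • d with hω'
  set S : Set ℝ := {r : ℝ | ∃ x ∈ convexHull ℝ X, r = f x + ⟪ω', Q x⟫} with hS
  have hSmem : (f xk + ⟪ω', Q xk⟫) ∈ S := ⟨xk, hxk, rfl⟩
  -- bounded below
  have hbdd : BddBelow S := by
    obtain ⟨R, hR⟩ := (Metric.isBounded_iff_subset_closedBall 0).mp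
      ((isBounded_convexHull).mpr hX.isBounded)
    have hKc : IsCompact (Metric.closedBall (0 : EuclideanSpace ℝ (Fin n)) R) :=
      isCompact_closedBall _ _
    have hg : Continuous fun x : EuclideanSpace ℝ (Fin n) => f x + ⟪ω', Q x⟫ := by
      exact hfd.continuous.add ((continuous_const.inner (Q.continuous_of_finiteDimensional.comp continuous_id)))
    have himg : BddBelow ((fun x => f x + ⟪ω', Q x⟫) '' Metric.closedBall 0 R) :=
      (hKc.image hg).bddBelow
    refine himg.mono ?_
    rintro r ⟨x, hx, rfl⟩
    exact ⟨x, hR hx, rfl⟩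
  have hinf : phiC f Q X ω' ≤ f xk + ⟪ω', Q xk⟫ := csInf_le hbdd hSmem
  have hip : ⟪ω', Q xk⟫ = ⟪ω, Q xk⟫ + ρ * ‖d‖ ^ 2 := by
    have hQxk : (Q xk : EuclideanSpace ℝ (Fin q)) = d + zk := by simp [hd]
    rw [hω', inner_add_left, real_inner_smul_left]
    have : ⟪d, Q xk⟫ = ‖d‖ ^ 2 := by
      rw [hQxk, inner_add_right, hdz, real_inner_self_eq_norm_sq]; ring
    rw [this]
  have : augL f Q ρ xk zk ω + ρ / 2 * ‖Q xk - zk‖ ^ 2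
      = f xk + ⟪ω', Q xk⟫ := by
    rw [hip]; simp only [augL, ← hd]; ring
  rw [this]
  exact hinf
end

section
/- Let $\phi^C:\mathbb{R}^q\to\mathbb{R}$ be the concave dual function with optimal solution $\omega^*$ and optimal value $\zeta^{CLD}=\phi^C(\omega^*)$ over $Z^\perp$. Suppose sequences $\{\omega^k\}\subset Z^\perp$, $\{(x^k,z^k)\}\subset\operatorname{conv}(X)\times Z$ satisfy for each $k\ge1$: (i) $\omega^{k+1}=\omega^k+\rho(Qx^k-z^k)$ with $Qx^k-z^k\in Z^\perp$; (ii) $\phi^C(\omega^*)\le L_\rho(x^k,z^k,\omega^*)$; (iii) the serious step inequality $L_\rho(x^k,z^k,\omega^k)+\tfrac{\rho}{2}\|Qx^k-z^k\|_2^2-\widecheck\phi^k\le\tfrac{1}{\gamma}(\widecheck\phi^{k+1}-\widecheck\phi^k)$ for some $\gamma\in(0,1)$ where $\widecheck\phi^k\le\phi^C(\omega^k)\le\phi^C(\omega^*)$. Then $\|\omega^{k+1}-\omega^*\|_2^2\le\|\omega^k-\omega^*\|_2^2+2\rho[\widecheck\phi^k-\phi^C(\omega^*)]+\tfrac{2\rho}{\gamma}[\widecheck\phi^{k+1}-\widecheck\phi^k]$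 for each $k$, and consequently $\sum_{k=1}^\infty[\phi^C(\omega^*)-\widecheck\phi^k]<\infty$ and $\{\omega^k\}$ is bounded. -/
open RealInnerProductSpace

theorem stmt10 (n q : ℕ) (f : EuclideanSpace ℝ (Fin n) → ℝ)
    (hf : ConvexOn ℝ Set.univ f) (hfc : Continuous f)
    (Q : EuclideanSpace ℝ (Fin n) →ₗ[ℝ] EuclideanSpace ℝ (Fin q))
    (X : Set (EuclideanSpace ℝ (Fin n))) (hX : IsCompact X) (hXne : X.Nonempty)
    (Z : Submodule ℝ (EuclideanSpace ℝ (Fin q))) (ρ γ : ℝ) (hρ : 0 < ρ)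
    (hγ : γ ∈ Set.Ioo (0 : ℝ) 1)
    (ωstar : EuclideanSpace ℝ (Fin q)) (hωs : ωstar ∈ Zᗮ)
    (hopt : ∀ ω' ∈ Zᗮ, phiC f Q X ω' ≤ phiC f Q X ωstar)
    (ω : ℕ → EuclideanSpace ℝ (Fin q)) (hωZ : ∀ k, ω k ∈ Zᗮ)
    (x : ℕ → EuclideanSpace ℝ (Fin n)) (z : ℕ → EuclideanSpace ℝ (Fin q))
    (hx : ∀ k, x k ∈ convexHull ℝ X) (hz : ∀ k, z k ∈ Z)
    -- (i)
    (hup : ∀ k ≥ 1, ω (k + 1) = ω k + ρ • (Q (x k) - z k))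
    (hres : ∀ k ≥ 1, Q (x k) - z k ∈ Zᗮ)
    -- (ii)
    (hLbd : ∀ k ≥ 1, phiC f Q X ωstar ≤ augL f Q ρ (x k) (z k) ωstar)
    -- (iii) serious step inequality, with φ̌^k ≤ φ^C(ω^k) ≤ φ^C(ω^*)
    (phk : ℕ → ℝ)
    (hssc : ∀ k ≥ 1,
      augL f Q ρ (x k) (z k) (ω k) + ρ / 2 * ‖Q (x k) - z k‖ ^ 2 - phk k ≤
        (phk (k + 1) - phk k) / γ)
    (hphk : ∀ k ≥ 1, phk k ≤ phiC f Q X (ω k))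
    (hphk' : ∀ k ≥ 1, phiC f Q X (ω k) ≤ phiC f Q X ωstar) :
    (∀ k ≥ 1, ‖ω (k + 1) - ωstar‖ ^ 2 ≤ ‖ω k - ωstar‖ ^ 2 +
        2 * ρ * (phk k - phiC f Q X ωstar) + 2 * ρ / γ * (phk (k + 1) - phk k)) ∧
    Summable (fun k : ℕ => phiC f Q X ωstar - phk (k + 1)) ∧
    ∃ C : ℝ, ∀ k : ℕ, ‖ω k‖ ≤ C := by
  obtain ⟨hγ0, hγ1⟩ := hγ
  set φs := phiC f Q X ωstar with hφs
  -- key inequality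
  have key : ∀ k ≥ 1, ‖ω (k + 1) - ωstar‖ ^ 2 ≤ ‖ω k - ωstar‖ ^ 2 +
      2 * ρ * (phk k - φs) + 2 * ρ / γ * (phk (k + 1) - phk k) := by
    intro k hk
    set r := Q (x k) - z k with hrdef
    have hrec : ω (k + 1) - ωstar = (ω k - ωstar) + ρ • r := by
      rw [hup k hk]; abel
    have hnorm : ‖ω (k + 1) - ωstar‖ ^ 2 =
        ‖ω k - ωstar‖ ^ 2 + 2 * ρ * ⟪ω k - ωstar, r⟫ + ρ ^ 2 * ‖r‖ ^ 2 := by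
      rw [hrec, norm_add_sq_real, real_inner_smul_right, norm_smul,
        Real.norm_eq_abs, abs_of_pos hρ]
      ring
    have hz0 : ⟪ω k - ωstar, z k⟫ = 0 := by
      have h1 : ⟪z k, ω k⟫ = 0 := (Submodule.mem_orthogonal _ _).mp (hωZ k) (z k) (hz k)
      have h2 : ⟪z k, ωstar⟫ = 0 := (Submodule.mem_orthogonal _ _).mp hωs (z k) (hz k)
      have h1' : ⟪ω k, z k⟫ = 0 := by rw [real_inner_comm]; exact h1
      have h2' : ⟪ωstar, z k⟫ = 0 := by rw [real_inner_comm]; exact h2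
      rw [inner_sub_left, h1', h2']
      ring
    have hinner : ⟪ω k - ωstar, r⟫ =
        augL f Q ρ (x k) (z k) (ω k) - augL f Q ρ (x k) (z k) ωstar := by
      have : ⟪ω k - ωstar, r⟫ = ⟪ω k - ωstar, Q (x k)⟫ - ⟪ω k - ωstar, z k⟫ := by
        rw [hrdef, inner_sub_right]
      rw [this, hz0, inner_sub_left]
      simp only [augL]
      ring
    have hssc' := hssc k hk
    have hL := hLbd k hk
    -- multiply by 2ρ
    have h2ρ : (0:ℝ) < 2 * ρ := by linarith
    have hA : 2 * ρ * (augL f Q ρ (x k) (z k) (ω k) + ρ / 2 * ‖r‖ ^ 2) ≤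
        2 * ρ * (phk k + (phk (k + 1) - phk k) / γ) := by
      apply mul_le_mul_of_nonneg_left _ (le_of_lt h2ρ)
      linarith
    have hB : 2 * ρ * φs ≤ 2 * ρ * augL f Q ρ (x k) (z k) ωstar :=
      mul_le_mul_of_nonneg_left hL (le_of_lt h2ρ)
    have hγne : γ ≠ 0 := ne_of_gt hγ0
    have hcalc : 2 * ρ * (phk k + (phk (k + 1) - phk k) / γ) - 2 * ρ * φs =
        2 * ρ * (phk k - φs) + 2 * ρ / γ * (phk (k + 1) - phk k) := by
      field_simp
      ring
    rw [hnorm, hinner]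
    nlinarith [sq_nonneg ρ, sq_nonneg ‖r‖]
  -- b k
  set b : ℕ → ℝ := fun k => φs - phk k with hb
  have hbnn : ∀ k ≥ 1, 0 ≤ b k := by
    intro k hk
    have := hphk k hk
    have := hphk' k hk
    simp only [hb]
    linarith
  have hstep : ∀ k ≥ 1, ‖ω (k + 1) - ωstar‖ ^ 2 ≤
      ‖ω k - ωstar‖ ^ 2 - 2 * ρ * b k + 2 * ρ / γ * (b k - b (k + 1)) := by
    intro k hk
    have h := key k hk
    simp only [hb] at *
    have e1 : phk k - φs = -(φs - phk k) := by ring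
    have e2 : phk (k + 1) - phk k = (φs - phk k) - (φs - phk (k + 1)) := by ring
    rw [e1, e2] at h
    linarith [h, mul_neg (2 * ρ) (φs - phk k)]
  have hmain : ∀ N : ℕ, ‖ω (N + 1) - ωstar‖ ^ 2 +
      2 * ρ * ∑ j ∈ Finset.range N, b (j + 1) ≤
      ‖ω 1 - ωstar‖ ^ 2 + 2 * ρ / γ * (b 1 - b (N + 1)) := by
    intro N
    induction N with
    | zero => simp
    | succ N ih =>
      have hs := hstep (N + 1) (by omega)
      rw [Finset.sum_range_succ]
      have hmd := mul_add (2 * ρ) (∑ j ∈ Finset.range N, b (j + 1)) (b (N + 1))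
      linarith
  have hsum_nonneg : ∀ N : ℕ, 0 ≤ ∑ j ∈ Finset.range N, b (j + 1) := by
    intro N
    apply Finset.sum_nonneg
    intro j _
    exact hbnn (j + 1) (by omega)
  have hb1 : 0 ≤ b 1 := hbnn 1 le_rfl
  have hργ : (0:ℝ) < 2 * ρ / γ := by positivity
  -- summability
  have hsummable : Summable (fun k : ℕ => φs - phk (k + 1)) := by
    apply summable_of_sum_range_le (c := (‖ω 1 - ωstar‖ ^ 2 + 2 * ρ / γ * b 1) / (2 * ρ))
    · intro k; exact hbnn (k + 1) (by omega)
    · intro N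
      have h := hmain N
      have h1 : 0 ≤ ‖ω (N + 1) - ωstar‖ ^ 2 := sq_nonneg _
      have h2 : 0 ≤ b (N + 1) := hbnn (N + 1) (by omega)
      have h3 : 0 ≤ 2 * ρ / γ * b (N + 1) := mul_nonneg (le_of_lt hργ) h2
      have hS : ∑ i ∈ Finset.range N, (φs - phk (i + 1)) =
          ∑ j ∈ Finset.range N, b (j + 1) := rfl
      rw [hS, le_div_iff₀ (by linarith : (0:ℝ) < 2 * ρ)]
      nlinarith [mul_sub (2 * ρ / γ) (b 1) (b (N + 1))]
  -- boundedness
  have hbd : ∀ k ≥ 1, ‖ω k - ωstar‖ ^ 2 ≤ ‖ω 1 - ωstar‖ ^ 2 + 2 * ρ / γ * b 1 := by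
    intro k hk
    obtain ⟨N, rfl⟩ : ∃ N, k = N + 1 := ⟨k - 1, by omega⟩
    have h := hmain N
    have h2 : 0 ≤ b (N + 1) := hbnn (N + 1) (by omega)
    nlinarith [hsum_nonneg N, mul_nonneg (le_of_lt hργ) h2,
      mul_nonneg (by linarith : (0:ℝ) ≤ 2 * ρ) (hsum_nonneg N)]
  refine ⟨key, hsummable, ?_⟩
  set B := ‖ω 1 - ωstar‖ ^ 2 + 2 * ρ / γ * b 1 with hB
  refine ⟨max ‖ω 0‖ (‖ωstar‖ + Real.sqrt B), fun k => ?_⟩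
  rcases Nat.eq_zero_or_pos k with hk | hk
  · subst hk; exact le_max_left _ _
  · have h1 : ‖ω k - ωstar‖ ≤ Real.sqrt B := by
      have : ‖ω k - ωstar‖ = Real.sqrt (‖ω k - ωstar‖ ^ 2) :=
        (Real.sqrt_sq (norm_nonneg _)).symm
      rw [this]
      exact Real.sqrt_le_sqrt (hbd k hk)
    have h2 : ‖ω k‖ - ‖ωstar‖ ≤ ‖ω k - ωstar‖ := norm_sub_norm_le _ _
    have : ‖ω k‖ ≤ ‖ωstar‖ + Real.sqrt B := by linarith
    exact le_trans this (le_max_right _ _)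
end

section
/- (Stationarity of limit points under Armijo steps) Let $F:\mathbb{R}^{n}\times\mathbb{R}^{m}\to\mathbb{R}$ be convex and continuously differentiable, $X$ compact convex, $Z$ closed convex, with $z\mapsto F(x,z)$ inf-compact for each $x\in X$. Let $\{(x^k,z^k,d^k)\}$ satisfy: (i) $x^k+d^k\in X$ and $\nabla_x F(x^k,z^k)^\top d^k<0$; (ii) the gradient-related property (if $(x^k,z^k)\to(\bar x,\bar z)$ and some $\bar d\in X-\{\bar x\}$ has $\nabla_x F(\bar x,\bar z)^\top\bar d<0$, then $\limsup_k\nabla_x F(x^k,z^k)^\top d^k<0$); (iii) $F(x^{k+1},z^{k+1})\le F(x^k+\alpha^k d^k, z^k)$ where $\alpha^k$ is the Armijo step length with fixed parameters $\beta,\sigma\in(0,1)$. Then $\{(x^k,z^k)\}$ has limit points, and every limit point $(\bar x,\bar z)$ satisfies $\nabla_x F(\bar x,\bar z)^\top(x-\bar x)\ge0$ for all $x\in X$. -/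
/-!
The values `F (x k, z k)` decrease, so the iterates stay in the sublevel set of `(x 0, z 0)` over
`X × Z`. Convexity of `F` spreads the compactness of the single slice `{x 0} × Z` to this whole
sublevel set, which is therefore compact and carries limit points.

The Armijo decrease is summable, so `α k * ⟪∇ₓF (x k, z k), d k⟫ → 0`. At a non-stationary limit
point the gradient-related property keeps the slopes below some `c < 0` along the subsequence, so
`α k → 0` there and the step `α k / β` was rejected. By convexity this gives
`σ ⟪∇ₓF (x k, z k), d k⟫ < ⟪∇ₓF (x k + (α k / β) • d k, z k), d k⟫`, and in the limit (along a
further subsequence on which `d k` converges) `σ L ≤ L` with `L ≤ c < 0`, impossible as `σ < 1`.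
-/

open RealInnerProductSpace Filter Topology Set Bornology

section Gradient

variable {E G : Type*} [NormedAddCommGroup E] [InnerProductSpace ℝ E] [CompleteSpace E]
  [NormedAddCommGroup G] [NormedSpace ℝ G] {F : E × G → ℝ}

theorem inner_gradient_prodMk_left {x : E} {q : G} (hF : DifferentiableAt ℝ F (x, q)) (v : E) :
    ⟪gradient (fun x' => F (x', q)) x, v⟫ = fderiv ℝ F (x, q) (v, 0) := by
  have h : HasFDerivAt (fun x' => F (x', q)) ((fderiv ℝ F (x, q)).comp (.inl ℝ E G)) x :=
    hF.hasFDerivAt.comp x (hasFDerivAt_prodMk_left x q)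
  rw [inner_gradient_left, h.fderiv]
  rfl

theorem continuous_inner_gradient_prodMk_left (hF : ContDiff ℝ 1 F) :
    Continuous fun w : (E × G) × E => ⟪gradient (fun x => F (x, w.1.2)) w.1.1, w.2⟫ := by
  simp_rw [inner_gradient_prodMk_left (hF.differentiable one_ne_zero _)]
  exact ((hF.continuous_fderiv one_ne_zero).comp continuous_fst).clm_apply
    (continuous_snd.prodMk continuous_const)

end Gradient

theorem ConvexOn.add_fderiv_sub_le {E : Type*} [NormedAddCommGroup E] [NormedSpace ℝ E]
    {f : E → ℝ} (hf : ConvexOn ℝ univ f) {x : E} (hx : DifferentiableAt ℝ f x) (y : E) :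
    f x + fderiv ℝ f x (y - x) ≤ f y := by
  set l : ℝ →ᵃ[ℝ] E := AffineMap.lineMap x y
  have hline : ConvexOn ℝ univ (f ∘ l) := hf.comp_affineMap l
  have hf' : HasFDerivAt f (fderiv ℝ f x) (l 0) := by simpa [l] using hx.hasFDerivAt
  have hderiv : HasDerivAt (f ∘ l) (fderiv ℝ f x (y - x)) 0 :=
    hf'.comp_hasDerivAt (0 : ℝ) AffineMap.hasDerivAt_lineMap
  have := hline.le_slope_of_hasDerivAt (mem_univ 0) (mem_univ 1) one_pos hderiv
  simp only [slope_def_field, Function.comp_apply, l, AffineMap.lineMap_apply_one,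
    AffineMap.lineMap_apply_zero, sub_zero, div_one] at this
  linarith

theorem ConvexOn.comp_prodMk_left {E G : Type*} [AddCommGroup E] [Module ℝ E] [AddCommGroup G]
    [Module ℝ G] {F : E × G → ℝ} (hF : ConvexOn ℝ univ F) (q : G) :
    ConvexOn ℝ univ fun x => F (x, q) :=
  hF.comp_affineMap ((AffineMap.id ℝ E).prod (AffineMap.const ℝ E q))

section Armijo

variable {E : Type*} [NormedAddCommGroup E] [InnerProductSpace ℝ E] [CompleteSpace E]

def IsArmijoStep (f : E → ℝ) (β σ : ℝ) (x d : E) (α : ℝ) : Prop :=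
  ∃ j : ℕ, α = β ^ j ∧ f (x + α • d) - f x ≤ α * σ * ⟪gradient f x, d⟫ ∧
    ∀ i < j, ¬f (x + β ^ i • d) - f x ≤ β ^ i * σ * ⟪gradient f x, d⟫

namespace IsArmijoStep

variable {f : E → ℝ} {β σ α : ℝ} {x d : E}

theorem pos (h : IsArmijoStep f β σ x d α) (hβ : 0 < β) : 0 < α := by
  obtain ⟨j, rfl, -⟩ := h
  positivity

theorem sub_le (h : IsArmijoStep f β σ x d α) :
    f (x + α • d) - f x ≤ α * σ * ⟪gradient f x, d⟫ :=
  h.choose_spec.2.1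

/-- The step `α / β` was rejected, and by convexity the decrease it achieves is at most `α / β`
times the slope at the rejected point. -/
theorem lt_inner_gradient (h : IsArmijoStep f β σ x d α) (hf : ConvexOn ℝ univ f)
    (hfd : DifferentiableAt ℝ f (x + (α / β) • d)) (hβ : 0 < β) (hα : α < 1) :
    σ * ⟪gradient f x, d⟫ < ⟪gradient f (x + (α / β) • d), d⟫ := by
  obtain ⟨j, rfl, -, hrejected⟩ := h
  obtain ⟨i, rfl⟩ : ∃ i, j = i + 1 := Nat.exists_eq_add_one.2 <| Nat.pos_of_ne_zero <| by
    rintro rfl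
    simp at hα
  have hstep : β ^ (i + 1) / β = β ^ i := by rw [pow_succ, mul_div_cancel_right₀ _ hβ.ne']
  rw [hstep] at hfd ⊢
  have hgrad := hf.add_fderiv_sub_le hfd x
  rw [show x - (x + β ^ i • d) = -(β ^ i • d) by abel, map_neg, map_smul,
    ← inner_gradient_left, smul_eq_mul] at hgrad
  have hrej := not_le.1 (hrejected i i.lt_succ_self)
  refine lt_of_mul_lt_mul_left ?_ (pow_pos hβ i).le
  linarith

end IsArmijoStep

end Armijo

theorem tendsto_zero_of_le_sub_succ {u a : ℕ → ℝ} (hu : BddBelow (range u)) (ha : ∀ k, 0 ≤ a k)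
    (hle : ∀ k, a k ≤ u k - u (k + 1)) : Tendsto a atTop (𝓝 0) := by
  have hanti : Antitone u := antitone_nat_of_succ_le fun k => by linarith [ha k, hle k]
  have hlim := tendsto_atTop_ciInf hanti hu
  have hdiff : Tendsto (fun k => u k - u (k + 1)) atTop (𝓝 0) := by
    simpa using hlim.sub (hlim.comp (tendsto_add_atTop_nat 1))
  exact tendsto_of_tendsto_of_tendsto_of_le_of_le tendsto_const_nhds hdiff ha hle

theorem exists_ball_prod_subset_of_isCompact {E G : Type*} [PseudoMetricSpace E]
    [TopologicalSpace G] {x₀ : E} {T : Set G} {U : Set (E × G)} (hT : IsCompact T)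
    (hU : IsOpen U) (hTU : {x₀} ×ˢ T ⊆ U) : ∃ η > 0, Metric.ball x₀ η ×ˢ T ⊆ U := by
  obtain ⟨u, v, hu, -, hx₀u, hTv, huv⟩ := generalized_tube_lemma isCompact_singleton hT hU hTU
  obtain ⟨η, hη, hηu⟩ := Metric.isOpen_iff.1 hu x₀ (hx₀u rfl)
  exact ⟨η, hη, (prod_mono hηu hTv).trans huv⟩

section Sublevel

variable {E G : Type*} [NormedAddCommGroup E] [NormedSpace ℝ E] [NormedAddCommGroup G]
  [NormedSpace ℝ G] {F : E × G → ℝ} {X : Set E} {Z : Set G} {x₀ : E} {w₀ : G} {ℓ : ℝ}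

/-- A point `(x, w)` of the sublevel set with `w` far out, shrunk towards `(x₀, w₀)` until `w`
reaches a fixed large sphere around `w₀`, lands close to `{x₀} × (Z ∩ sphere)`, where `F > ℓ`
because the slice is bounded. -/
theorem isBounded_snd_sublevel_of_convexOn [ProperSpace G] (hconv : ConvexOn ℝ univ F)
    (hcont : Continuous F) (hX : IsBounded X) (hZ : IsClosed Z) (hZconv : Convex ℝ Z)
    (hw₀ : w₀ ∈ Z) (hℓ : F (x₀, w₀) ≤ ℓ) (hslice : IsBounded {w ∈ Z | F (x₀, w) ≤ ℓ}) :
    IsBounded (Prod.snd '' (X ×ˢ Z ∩ {p | F p ≤ ℓ})) := by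
  obtain ⟨r, hr⟩ := (Metric.isBounded_iff_subset_closedBall w₀).1 hslice
  set R := max r 0 + 1
  have hR : 0 < R := by positivity
  have hTF : {x₀} ×ˢ (Z ∩ Metric.sphere w₀ R) ⊆ {p | ℓ < F p} := by
    rintro ⟨x, w⟩ ⟨hx, hwZ, hwR⟩
    show ℓ < F (x, w)
    rw [show x = x₀ from hx]
    by_contra! hle
    have := hr ⟨hwZ, hle⟩
    rw [Metric.mem_closedBall, Metric.mem_sphere.1 hwR] at this
    linarith [le_max_left r 0]
  obtain ⟨η, hη, hηT⟩ := exists_ball_prod_subset_of_isCompact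
    ((isCompact_sphere w₀ R).inter_left hZ) (isOpen_lt continuous_const hcont) hTF
  obtain ⟨D, hD⟩ := (Metric.isBounded_iff_subset_closedBall x₀).1 hX
  rw [Metric.isBounded_iff_subset_closedBall w₀]
  refine ⟨max R (R * D / η), ?_⟩
  rintro _ ⟨⟨x, w⟩, ⟨⟨hxX, hwZ⟩, hFxw⟩, rfl⟩
  by_contra! hfar
  rw [Metric.mem_closedBall, not_le, max_lt_iff, div_lt_iff₀ hη] at hfar
  set t := R / dist w w₀
  have hdist : 0 < dist w w₀ := hR.trans hfar.1
  have ht₀ : 0 ≤ t := by positivity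
  have ht₁ : t ≤ 1 := (div_le_one hdist).2 hfar.1.le
  set p : E × G := AffineMap.lineMap (x₀, w₀) (x, w) t
  have hp₁ : dist p.1 x₀ < η := by
    calc dist p.1 x₀ = t * dist x₀ x := by
          rw [AffineMap.fst_lineMap, dist_lineMap_left, Real.norm_of_nonneg ht₀]
      _ ≤ t * D := by gcongr; rw [dist_comm]; exact hD hxX
      _ < η := by rw [div_mul_eq_mul_div, div_lt_iff₀ hdist]; linarith
  have hp₂ : p.2 ∈ Z ∩ Metric.sphere w₀ R := by
    rw [AffineMap.snd_lineMap]
    refine ⟨hZconv.lineMap_mem hw₀ hwZ ⟨ht₀, ht₁⟩, ?_⟩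
    rw [Metric.mem_sphere, dist_lineMap_left, Real.norm_of_nonneg ht₀, dist_comm,
      div_mul_cancel₀ _ hdist.ne']
  have hpF : F p ≤ ℓ := by
    calc F p ≤ (1 - t) • F (x₀, w₀) + t • F (x, w) := by
          rw [show p = (1 - t) • (x₀, w₀) + t • (x, w) from AffineMap.lineMap_apply_module _ _ _]
          exact hconv.2 (mem_univ _) (mem_univ _) (by linarith) ht₀ (by ring)
      _ ≤ (1 - t) • ℓ + t • ℓ := by gcongr; exact hFxw
      _ = ℓ := by rw [← add_smul, sub_add_cancel, one_smul]
  exact (hηT ⟨hp₁, hp₂⟩).not_ge hpF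

theorem isCompact_sublevel_of_convexOn [ProperSpace E] [ProperSpace G]
    (hconv : ConvexOn ℝ univ F) (hcont : Continuous F) (hX : IsCompact X) (hZ : IsClosed Z) (hZconv : Convex ℝ Z)
    (hw₀ : w₀ ∈ Z) (hℓ : F (x₀, w₀) ≤ ℓ) (hslice : IsBounded {w ∈ Z | F (x₀, w) ≤ ℓ}) :
    IsCompact (X ×ˢ Z ∩ {p | F p ≤ ℓ}) := by
  refine Metric.isCompact_of_isClosed_isBounded
    ((hX.isClosed.prod hZ).inter (isClosed_le hcont continuous_const)) ?_
  refine (hX.isBounded.prod (isBounded_snd_sublevel_of_convexOn hconv hcont hX.isBounded hZ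
    hZconv hw₀ hℓ hslice)).subset fun p hp => ⟨hp.1.1, p, hp, rfl⟩

end Sublevel

section Stationarity

variable {E G : Type*} [NormedAddCommGroup E] [InnerProductSpace ℝ E] [CompleteSpace E]
  {F : E × G → ℝ} {β σ : ℝ} {x d : ℕ → E} {z : ℕ → G} {α : ℕ → ℝ}

theorem antitone_of_armijo (hβ : 0 < β) (hσ : 0 ≤ σ)
    (harm : ∀ k, IsArmijoStep (fun x' => F (x', z k)) β σ (x k) (d k) (α k))
    (hdesc : ∀ k, ⟪gradient (fun x' => F (x', z k)) (x k), d k⟫ ≤ 0)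
    (hSD : ∀ k, F (x (k + 1), z (k + 1)) ≤ F (x k + α k • d k, z k)) :
    Antitone fun k => F (x k, z k) :=
  antitone_nat_of_succ_le fun k => by
    have := mul_nonneg (mul_nonneg ((harm k).pos hβ).le hσ) (neg_nonneg.2 (hdesc k))
    linarith [hSD k, (harm k).sub_le]

theorem tendsto_mul_inner_gradient_of_armijo (hβ : 0 < β) (hσ : 0 < σ)
    (harm : ∀ k, IsArmijoStep (fun x' => F (x', z k)) β σ (x k) (d k) (α k))
    (hdesc : ∀ k, ⟪gradient (fun x' => F (x', z k)) (x k), d k⟫ ≤ 0)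
    (hSD : ∀ k, F (x (k + 1), z (k + 1)) ≤ F (x k + α k • d k, z k))
    (hbdd : BddBelow (range fun k => F (x k, z k))) :
    Tendsto (fun k => α k * ⟪gradient (fun x' => F (x', z k)) (x k), d k⟫) atTop (𝓝 0) := by
  have h := (tendsto_zero_of_le_sub_succ hbdd
    (fun k => mul_nonneg (mul_nonneg ((harm k).pos hβ).le hσ.le) (neg_nonneg.2 (hdesc k)))
    (fun k => by linarith [hSD k, (harm k).sub_le])).div_const (-σ)
  rw [zero_div] at h
  exact h.congr fun k => by field_simp

variable [NormedAddCommGroup G] [NormedSpace ℝ G] {xbar : E} {zbar : G}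

theorem Filter.Tendsto.inner_gradient_prodMk_left {ι : Type*} {l : Filter ι} {x d : ι → E}
    {z : ι → G} {dbar : E} (hF : ContDiff ℝ 1 F) (hx : Tendsto x l (𝓝 xbar))
    (hz : Tendsto z l (𝓝 zbar)) (hd : Tendsto d l (𝓝 dbar)) :
    Tendsto (fun k => ⟪gradient (fun x' => F (x', z k)) (x k), d k⟫) l
      (𝓝 ⟪gradient (fun x' => F (x', zbar)) xbar, dbar⟫) :=
  ((continuous_inner_gradient_prodMk_left hF).tendsto ((xbar, zbar), dbar)).comp
    (f := fun k => ((x k, z k), d k)) ((hx.prodMk_nhds hz).prodMk_nhds hd)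

theorem inner_gradient_nonneg_of_armijo_of_tendsto (hFconv : ConvexOn ℝ univ F)
    (hF : ContDiff ℝ 1 F) (hβ : 0 < β) (hσ : σ < 1)
    (harm : ∀ k, IsArmijoStep (fun x' => F (x', z k)) β σ (x k) (d k) (α k)) {dbar : E}
    (hx : Tendsto x atTop (𝓝 xbar)) (hz : Tendsto z atTop (𝓝 zbar)) (hd : Tendsto d atTop (𝓝 dbar))
    (hα : Tendsto α atTop (𝓝 0)) :
    0 ≤ ⟪gradient (fun x' => F (x', zbar)) xbar, dbar⟫ := by
  have hFd := hF.differentiable one_ne_zero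
  have hrejected : Tendsto (fun k => x k + (α k / β) • d k) atTop (𝓝 xbar) := by
    simpa using hx.add ((hα.div_const β).smul hd)
  have hle := le_of_tendsto_of_tendsto ((hx.inner_gradient_prodMk_left hF hz hd).const_mul σ)
    (hrejected.inner_gradient_prodMk_left hF hz hd) <|
    (hα.eventually_lt_const one_pos).mono fun k hk =>
      ((harm k).lt_inner_gradient (hFconv.comp_prodMk_left (z k)) (by fun_prop) hβ hk).le
  nlinarith

theorem nonneg_of_armijo_of_eventually_inner_gradient_le [ProperSpace E]
    (hFconv : ConvexOn ℝ univ F) (hF : ContDiff ℝ 1 F) (hβ : 0 < β) (hσ : σ < 1)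
    (harm : ∀ k, IsArmijoStep (fun x' => F (x', z k)) β σ (x k) (d k) (α k))
    (hx : Tendsto x atTop (𝓝 xbar)) (hz : Tendsto z atTop (𝓝 zbar)) {s : Set E} (hs : IsBounded s)
    (hd : ∀ k, d k ∈ s)
    (hαg : Tendsto (fun k => α k * ⟪gradient (fun x' => F (x', z k)) (x k), d k⟫) atTop (𝓝 0))
    {c : ℝ} (hc : ∀ᶠ k in atTop, ⟪gradient (fun x' => F (x', z k)) (x k), d k⟫ ≤ c) :
    0 ≤ c := by
  by_contra! hc₀
  have hα : Tendsto α atTop (𝓝 0) := by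
    have hup : Tendsto (fun k => α k * ⟪gradient (fun x' => F (x', z k)) (x k), d k⟫ / c) atTop
        (𝓝 0) := by simpa using hαg.div_const c
    refine tendsto_of_tendsto_of_tendsto_of_le_of_le' tendsto_const_nhds hup
      (.of_forall fun k => ((harm k).pos hβ).le) ?_
    filter_upwards [hc] with k hk
    rw [le_div_iff_of_neg hc₀]
    exact mul_le_mul_of_nonneg_left hk ((harm k).pos hβ).le
  obtain ⟨dbar, -, φ, hφ, hdφ⟩ := tendsto_subseq_of_bounded hs hd
  have hφ := hφ.tendsto_atTop
  have hnonneg := inner_gradient_nonneg_of_armijo_of_tendsto hFconv hF hβ hσ (fun k => harm (φ k))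
    (hx.comp hφ) (hz.comp hφ) hdφ (hα.comp hφ)
  have hle := le_of_tendsto ((hx.comp hφ).inner_gradient_prodMk_left hF (hz.comp hφ) hdφ)
    (hφ.eventually hc)
  linarith

end Stationarity

theorem stmt15_general (n m : ℕ)
    (F : EuclideanSpace ℝ (Fin n) × EuclideanSpace ℝ (Fin m) → ℝ)
    (hFconv : ConvexOn ℝ Set.univ F) (hF : ContDiff ℝ 1 F)
    (X : Set (EuclideanSpace ℝ (Fin n))) (hX : IsCompact X)
    (Z : Set (EuclideanSpace ℝ (Fin m))) (hZ : IsClosed Z) (hZconv : Convex ℝ Z)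
    (hinf : ∀ x ∈ X, ∀ ℓ : ℝ, IsCompact {w ∈ Z | F (x, w) ≤ ℓ})
    (x : ℕ → EuclideanSpace ℝ (Fin n)) (z : ℕ → EuclideanSpace ℝ (Fin m))
    (d : ℕ → EuclideanSpace ℝ (Fin n)) (α : ℕ → ℝ)
    (hxX : ∀ k, x k ∈ X) (hzZ : ∀ k, z k ∈ Z)
    (β σ : ℝ) (hβ : β ∈ Set.Ioo (0 : ℝ) 1) (hσ : σ ∈ Set.Ioo (0 : ℝ) 1)
    -- (i) feasible descent directions
    (hdX : ∀ k, x k + d k ∈ X)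
    (hdesc : ∀ k, ⟪gradient (fun x' => F (x', z k)) (x k), d k⟫ < (0 : ℝ))
    -- (ii) gradient-related property (along convergent subsequences)
    (hGR : ∀ (ψ : ℕ → ℕ), StrictMono ψ →
      ∀ (xbar : EuclideanSpace ℝ (Fin n)) (zbar : EuclideanSpace ℝ (Fin m)),
      Tendsto (fun k => (x (ψ k), z (ψ k))) atTop (𝓝 (xbar, zbar)) →
      (∃ dbar, (∃ y ∈ X, dbar = y - xbar) ∧
        ⟪gradient (fun x' => F (x', zbar)) xbar, dbar⟫ < (0 : ℝ)) →
      limsup (fun k => ⟪gradient (fun x' => F (x', z (ψ k))) (x (ψ k)), d (ψ k)⟫)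
        atTop < 0)
    -- (iii) Armijo step lengths and sufficient decrease
    (hArmijo : ∀ k, ∃ j : ℕ, α k = β ^ j ∧
      (F (x k + α k • d k, z k) - F (x k, z k) ≤
        α k * σ * ⟪gradient (fun x' => F (x', z k)) (x k), d k⟫) ∧
      ∀ i < j, ¬(F (x k + β ^ i • d k, z k) - F (x k, z k) ≤
        β ^ i * σ * ⟪gradient (fun x' => F (x', z k)) (x k), d k⟫))
    (hSD : ∀ k, F (x (k + 1), z (k + 1)) ≤ F (x k + α k • d k, z k)) :
    (∃ p : EuclideanSpace ℝ (Fin n) × EuclideanSpace ℝ (Fin m),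
      MapClusterPt p atTop (fun k => (x k, z k))) ∧
    ∀ (xbar : EuclideanSpace ℝ (Fin n)) (zbar : EuclideanSpace ℝ (Fin m)),
      MapClusterPt (xbar, zbar) atTop (fun k => (x k, z k)) →
      ∀ x' ∈ X, (0 : ℝ) ≤ ⟪gradient (fun u => F (u, zbar)) xbar, x' - xbar⟫ := by
  obtain ⟨hβ₀, -⟩ := hβ
  obtain ⟨hσ₀, hσ₁⟩ := hσ
  have harm : ∀ k, IsArmijoStep (fun x' => F (x', z k)) β σ (x k) (d k) (α k) := hArmijo
  set K := X ×ˢ Z ∩ {p | F p ≤ F (x 0, z 0)}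
  have hK : IsCompact K := isCompact_sublevel_of_convexOn hFconv hF.continuous hX hZ hZconv
    (hzZ 0) le_rfl (hinf _ (hxX 0) _).isBounded
  have hanti := antitone_of_armijo hβ₀ hσ₀.le harm (fun k => (hdesc k).le) hSD
  have hmem : ∀ k, (x k, z k) ∈ K := fun k => ⟨⟨hxX k, hzZ k⟩, hanti k.zero_le⟩
  have hbdd : BddBelow (range fun k => F (x k, z k)) := (hK.image hF.continuous).bddBelow.mono
    (range_subset_iff.2 fun k => mem_image_of_mem F (hmem k))
  have hαg := tendsto_mul_inner_gradient_of_armijo hβ₀ hσ₀ harm (fun k => (hdesc k).le) hSD hbdd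
  refine ⟨(hK.exists_mapClusterPt (tendsto_principal.2 (.of_forall hmem))).imp fun _ h => h.2,
    fun xbar zbar hcl y hy => ?_⟩
  by_contra! hdescent
  obtain ⟨ψ, hψ, hlim⟩ := hcl.tendsto_subseq
  have hlimsup := hGR ψ hψ xbar zbar hlim ⟨y - xbar, ⟨y, hy, rfl⟩, hdescent⟩
  obtain ⟨c, hlimsup_lt, hc⟩ := exists_between hlimsup
  have hev := eventually_lt_of_limsup_lt hlimsup_lt
    (isBoundedUnder_of ⟨0, fun k => (hdesc (ψ k)).le⟩)
  have := nonneg_of_armijo_of_eventually_inner_gradient_le hFconv hF hβ₀ hσ₁ (fun k => harm (ψ k))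
    hlim.fst_nhds hlim.snd_nhds (isBounded_sub hX.isBounded hX.isBounded)
    (fun k => Set.mem_sub.2 ⟨_, hdX (ψ k), _, hxX (ψ k), add_sub_cancel_left _ _⟩)
    (hαg.comp hψ.tendsto_atTop) (hev.mono fun _ h => h.le)
  linarith

theorem stmt15 (n m : ℕ)
    (F : EuclideanSpace ℝ (Fin n) × EuclideanSpace ℝ (Fin m) → ℝ)
    (hFconv : ConvexOn ℝ Set.univ F) (hF : ContDiff ℝ 1 F)
    (X : Set (EuclideanSpace ℝ (Fin n))) (hX : IsCompact X) (hXconv : Convex ℝ X)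
    (Z : Set (EuclideanSpace ℝ (Fin m))) (hZ : IsClosed Z) (hZconv : Convex ℝ Z)
    (hinf : ∀ x ∈ X, ∀ ℓ : ℝ, IsCompact {w ∈ Z | F (x, w) ≤ ℓ})
    (x : ℕ → EuclideanSpace ℝ (Fin n)) (z : ℕ → EuclideanSpace ℝ (Fin m))
    (d : ℕ → EuclideanSpace ℝ (Fin n)) (α : ℕ → ℝ)
    (hxX : ∀ k, x k ∈ X) (hzZ : ∀ k, z k ∈ Z)
    (β σ : ℝ) (hβ : β ∈ Set.Ioo (0 : ℝ) 1) (hσ : σ ∈ Set.Ioo (0 : ℝ) 1)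
    -- (i) feasible descent directions
    (hdX : ∀ k, x k + d k ∈ X)
    (hdesc : ∀ k, ⟪gradient (fun x' => F (x', z k)) (x k), d k⟫ < (0 : ℝ))
    -- (ii) gradient-related property (along convergent subsequences)
    (hGR : ∀ (ψ : ℕ → ℕ), StrictMono ψ →
      ∀ (xbar : EuclideanSpace ℝ (Fin n)) (zbar : EuclideanSpace ℝ (Fin m)),
      Tendsto (fun k => (x (ψ k), z (ψ k))) atTop (𝓝 (xbar, zbar)) →
      (∃ dbar, (∃ y ∈ X, dbar = y - xbar) ∧
        ⟪gradient (fun x' => F (x', zbar)) xbar, dbar⟫ < (0 : ℝ)) →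
      limsup (fun k => ⟪gradient (fun x' => F (x', z (ψ k))) (x (ψ k)), d (ψ k)⟫)
        atTop < 0)
    -- (iii) Armijo step lengths and sufficient decrease
    (hArmijo : ∀ k, ∃ j : ℕ, α k = β ^ j ∧
      (F (x k + α k • d k, z k) - F (x k, z k) ≤
        α k * σ * ⟪gradient (fun x' => F (x', z k)) (x k), d k⟫) ∧
      ∀ i < j, ¬(F (x k + β ^ i • d k, z k) - F (x k, z k) ≤
        β ^ i * σ * ⟪gradient (fun x' => F (x', z k)) (x k), d k⟫))
    (hSD : ∀ k, F (x (k + 1), z (k + 1)) ≤ F (x k + α k • d k, z k)) :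
    (∃ p : EuclideanSpace ℝ (Fin n) × EuclideanSpace ℝ (Fin m),
      MapClusterPt p atTop (fun k => (x k, z k))) ∧
    ∀ (xbar : EuclideanSpace ℝ (Fin n)) (zbar : EuclideanSpace ℝ (Fin m)),
      MapClusterPt (xbar, zbar) atTop (fun k => (x k, z k)) →
      ∀ x' ∈ X, (0 : ℝ) ≤ ⟪gradient (fun u => F (u, zbar)) xbar, x' - xbar⟫ :=
  stmt15_general n m F hFconv hF X hX Z hZ hZconv hinf x z d α hxX hzZ β σ hβ hσ hdX hdesc hGR
    hArmijo hSD
end
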